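/- arXiv:2012.11070 — 4 statements merged into one kernel-verified Lean document; each statement's English description precedes it below -/
import Mathlib

section
/- Let d ≥ 1, δ > 0, and x, y ∈ ℝ^d. Suppose for each coordinate i there are reals a_i < b_i with a_i ≤ x_i ≤ b_i, b_i − a_i ≤ δ, and y_i ∉ (a_i, b_i) (y_i lies outside the open interval). Let Q be a random vector whose i-th coordinate equals b_i with probability (x_i − a_i)/(b_i − a_i) and equals a_i with probability (b_i − x_i)/(b_i − a_i). Then E‖Q − x‖₂² = Σ_i (x_i − a_i)(b_i − x_i) ≤ δ · Σ_i |x_i − y_i| ≤ δ · √d · ‖x − y‖₂. -/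
open Finset

/-- Coordinate-wise stochastic rounding error bound: the expected squared ℓ₂-error
equals `∑ i (x i - a i)(b i - x i)`, which is at most `δ ∑ i |x i - y i| ≤ δ √d ‖x - y‖₂`
whenever each `y i` lies outside the open rounding interval `(a i, b i)`. -/
theorem stmt_1 (d : ℕ) (hd : 1 ≤ d) (δ : ℝ) (hδ : 0 < δ)
    (x y : EuclideanSpace ℝ (Fin d)) (a b : Fin d → ℝ)
    (hab : ∀ i, a i < b i) (hax : ∀ i, a i ≤ x i) (hxb : ∀ i, x i ≤ b i)
    (hres : ∀ i, b i - a i ≤ δ) (hy : ∀ i, y i ∉ Set.Ioo (a i) (b i)) :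
    (∑ i, (((x i - a i) / (b i - a i)) * (b i - x i) ^ 2
        + ((b i - x i) / (b i - a i)) * (a i - x i) ^ 2))
      = ∑ i, (x i - a i) * (b i - x i) ∧
    (∑ i, (x i - a i) * (b i - x i)) ≤ δ * ∑ i, |x i - y i| ∧
    δ * (∑ i, |x i - y i|) ≤ δ * Real.sqrt d * ‖x - y‖ := by
  refine ⟨?_, ?_, ?_⟩
  · apply Finset.sum_congr rfl
    intro i _
    have h : b i - a i ≠ 0 := sub_ne_zero.2 (hab i).ne'
    field_simp
    ring
  · rw [Finset.mul_sum]
    apply Finset.sum_le_sum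
    intro i _
    have hy' := hy i
    simp only [Set.mem_Ioo, not_and_or, not_lt] at hy'
    rcases hy' with h | h
    · -- y i ≤ a i
      have h1 : x i - a i ≤ |x i - y i| := by
        rw [abs_of_nonneg (by linarith [hax i])]; linarith
      have h2 : 0 ≤ b i - x i := by linarith [hxb i]
      calc (x i - a i) * (b i - x i) ≤ (x i - a i) * δ := by
            apply mul_le_mul_of_nonneg_left _ (by linarith [hax i])
            linarith [hres i, hax i]
        _ ≤ |x i - y i| * δ := by
            apply mul_le_mul_of_nonneg_right h1 hδ.le
        _ = δ * |x i - y i| := mul_comm _ _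
    · -- b i ≤ y i
      have h1 : b i - x i ≤ |x i - y i| := by
        rw [abs_of_nonpos (by linarith [hxb i])]; linarith
      calc (x i - a i) * (b i - x i) ≤ δ * (b i - x i) := by
            apply mul_le_mul_of_nonneg_right _ (by linarith [hxb i])
            linarith [hres i, hxb i]
        _ ≤ δ * |x i - y i| := mul_le_mul_of_nonneg_left h1 hδ.le
  · rw [mul_assoc]
    apply mul_le_mul_of_nonneg_left _ hδ.le
    have hnorm : ‖x - y‖ = Real.sqrt (∑ i, (x i - y i) ^ 2) := by
      rw [EuclideanSpace.norm_eq]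
      congr 1
      apply Finset.sum_congr rfl
      intro i _
      simp [Real.norm_eq_abs, sq_abs]
    rw [hnorm, ← Real.sqrt_mul (by positivity)]
    have h1 : (∑ i, |x i - y i|) ^ 2 ≤ d * ∑ i, (x i - y i) ^ 2 := by
      have := sq_sum_le_card_mul_sum_sq (s := Finset.univ) (f := fun i => |x i - y i|)
      simpa [sq_abs] using this
    calc ∑ i, |x i - y i| = Real.sqrt ((∑ i, |x i - y i|) ^ 2) := by
          rw [Real.sqrt_sq (by positivity)]
      _ ≤ Real.sqrt (d * ∑ i, (x i - y i) ^ 2) := Real.sqrt_le_sqrt h1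
end

section
/- Let F_1, …, F_N : ℝ^d → ℝ be differentiable functions whose gradients are L-Lipschitz (‖∇F_i(x) − ∇F_i(y)‖₂ ≤ L‖x − y‖₂ for all x, y), let π_1, …, π_N ≥ 0 with Σ_i π_i = 1, and let F = Σ_i π_i F_i. Then for all points w̄, w_1, …, w_N ∈ ℝ^d: ⟨∇F(w̄), −Σ_i π_i ∇F_i(w_i)⟩ ≤ −(1/2)‖∇F(w̄)‖₂² − (1/2)‖Σ_i π_i ∇F_i(w_i)‖₂² + (L²/2) Σ_i π_i ‖w̄ − w_i‖₂². -/
/-!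
By polarization, `⟪a, -b⟫ = -½‖a‖² - ½‖b‖² + ½‖a - b‖²`. With `a = ∇F(w̄) = ∑ πᵢ ∇Fᵢ(w̄)` and
`b = ∑ πᵢ ∇Fᵢ(wᵢ)`, the difference `a - b = ∑ πᵢ (∇Fᵢ(w̄) - ∇Fᵢ(wᵢ))` is a convex combination, so
Jensen's inequality for `‖·‖²` and the Lipschitz bound give `‖a - b‖² ≤ L² ∑ πᵢ ‖w̄ - wᵢ‖²`.
-/

open Finset
open scoped RealInnerProductSpace

theorem gradient_sum_mul {ι E : Type*} [NormedAddCommGroup E] [InnerProductSpace ℝ E]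
    [CompleteSpace E] (s : Finset ι) (c : ι → ℝ) {f : ι → E → ℝ} {x : E}
    (hf : ∀ i ∈ s, DifferentiableAt ℝ (f i) x) :
    gradient (fun z => ∑ i ∈ s, c i * f i z) x = ∑ i ∈ s, c i • gradient (f i) x := by
  refine HasGradientAt.gradient ?_
  rw [hasGradientAt_iff_hasFDerivAt, map_sum]
  refine HasFDerivAt.fun_sum fun i hi => ?_
  simpa only [map_smul] using (hf i hi).hasGradientAt.hasFDerivAt.const_mul (c i)

theorem sq_norm_sum_smul_le {ι E : Type*} [SeminormedAddCommGroup E] [NormedSpace ℝ E]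
    {s : Finset ι} {π : ι → ℝ} (hπ : ∀ i ∈ s, 0 ≤ π i) (hπ1 : ∑ i ∈ s, π i = 1) (v : ι → E) :
    ‖∑ i ∈ s, π i • v i‖ ^ 2 ≤ ∑ i ∈ s, π i * ‖v i‖ ^ 2 :=
  (convexOn_univ_norm.pow (fun _ _ => norm_nonneg _) 2).map_sum_le hπ hπ1 fun _ _ => Set.mem_univ _

theorem sq_norm_sum_smul_sub_le_of_lipschitz {ι E F : Type*} [SeminormedAddCommGroup E]
    [SeminormedAddCommGroup F] [NormedSpace ℝ F] {s : Finset ι} {π : ι → ℝ}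
    (hπ : ∀ i ∈ s, 0 ≤ π i) (hπ1 : ∑ i ∈ s, π i = 1) {L : ℝ} {g : ι → E → F}
    (hg : ∀ i x y, ‖g i x - g i y‖ ≤ L * ‖x - y‖) (x : E) (y : ι → E) :
    ‖∑ i ∈ s, π i • (g i x - g i (y i))‖ ^ 2 ≤ L ^ 2 * ∑ i ∈ s, π i * ‖x - y i‖ ^ 2 := by
  refine (sq_norm_sum_smul_le hπ hπ1 _).trans ?_
  rw [mul_sum]
  refine sum_le_sum fun i hi => ?_
  calc π i * ‖g i x - g i (y i)‖ ^ 2 ≤ π i * (L * ‖x - y i‖) ^ 2 := by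
        gcongr
        · exact hπ i hi
        · exact hg i x (y i)
    _ = L ^ 2 * (π i * ‖x - y i‖ ^ 2) := by ring

theorem inner_neg_right_eq_half_sq_norm_sub {E : Type*} [NormedAddCommGroup E]
    [InnerProductSpace ℝ E] (a b : E) :
    ⟪a, -b⟫ = -(1 / 2) * ‖a‖ ^ 2 - (1 / 2) * ‖b‖ ^ 2 + (1 / 2) * ‖a - b‖ ^ 2 := by
  rw [inner_neg_right, norm_sub_sq_real]
  ring

/-- Inner-product bound (deterministic core of Lemma 3): for `F = ∑ i π i • F i` with
`L`-Lipschitz gradients and convex weights `π`,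
`⟨∇F(w̄), -∑ π i ∇F i (w i)⟩ ≤ -½‖∇F(w̄)‖² - ½‖∑ π i ∇F i (w i)‖² + (L²/2) ∑ π i ‖w̄ - w i‖²`. -/
theorem stmt_2 (d N : ℕ) (L : ℝ)
    (F : Fin N → EuclideanSpace ℝ (Fin d) → ℝ)
    (π : Fin N → ℝ) (hπ : ∀ i, 0 ≤ π i) (hπ1 : ∑ i, π i = 1)
    (hdiff : ∀ i, Differentiable ℝ (F i))
    (hlip : ∀ i x y, ‖gradient (F i) x - gradient (F i) y‖ ≤ L * ‖x - y‖)
    (wbar : EuclideanSpace ℝ (Fin d)) (w : Fin N → EuclideanSpace ℝ (Fin d)) :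
    ⟪gradient (fun z => ∑ i, π i * F i z) wbar, -∑ i, π i • gradient (F i) (w i)⟫
      ≤ -(1 / 2) * ‖gradient (fun z => ∑ i, π i * F i z) wbar‖ ^ 2
        - (1 / 2) * ‖∑ i, π i • gradient (F i) (w i)‖ ^ 2
        + (L ^ 2 / 2) * ∑ i, π i * ‖wbar - w i‖ ^ 2 := by
  rw [gradient_sum_mul univ π fun i _ => (hdiff i).differentiableAt,
    inner_neg_right_eq_half_sq_norm_sub]
  have hsub : ∑ i, π i • gradient (F i) wbar - ∑ i, π i • gradient (F i) (w i)
      = ∑ i, π i • (gradient (F i) wbar - gradient (F i) (w i)) := by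
    simp only [← sum_sub_distrib, smul_sub]
  have hlip_avg := sq_norm_sum_smul_sub_le_of_lipschitz (fun i _ => hπ i) hπ1 hlip wbar w
  rw [← hsub] at hlip_avg
  linarith
end

section
/- The function f : ℝ → ℝ defined by f(x) = 1/(2^(2^x) − 1) is well defined (2^(2^x) > 1 for every real x), strictly decreasing, and convex on ℝ. -/
noncomputable def tf (x : ℝ) : ℝ := Real.log 2 * Real.exp (Real.log 2 * x)
noncomputable def Ef (x : ℝ) : ℝ := Real.exp (tf x)
noncomputable def Ff (x : ℝ) : ℝ := (Ef x - 1)⁻¹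
noncomputable def F1 (x : ℝ) : ℝ := -(Ef x * (Real.log 2 * tf x)) / (Ef x - 1) ^ 2

lemma tf_pos (x : ℝ) : 0 < tf x := mul_pos (Real.log_pos one_lt_two) (Real.exp_pos _)

lemma Ef_gt_one (x : ℝ) : 1 < Ef x := by
  have : Real.exp 0 < Real.exp (tf x) := Real.exp_lt_exp.mpr (tf_pos x)
  simpa [Ef] using this

lemma tf_deriv (x : ℝ) : HasDerivAt tf (Real.log 2 * tf x) x := by
  have h : HasDerivAt (fun y : ℝ => Real.log 2 * y) (Real.log 2 * 1) x :=
    (hasDerivAt_id x).const_mul _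
  have h2 := (h.exp).const_mul (Real.log 2)
  have he : Real.log 2 * tf x = Real.log 2 * (Real.exp (Real.log 2 * x) * (Real.log 2 * 1)) := by
    simp only [tf]; ring
  rw [he]; exact h2

lemma Ef_deriv (x : ℝ) : HasDerivAt Ef (Ef x * (Real.log 2 * tf x)) x := (tf_deriv x).exp

lemma Ff_deriv (x : ℝ) : HasDerivAt Ff (F1 x) x := by
  have hne : Ef x - 1 ≠ 0 := by have := Ef_gt_one x; linarith
  exact ((Ef_deriv x).sub_const 1).inv hne

lemma F1_deriv (x : ℝ) : HasDerivAt F1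
    ((-(Ef x * (Real.log 2 * tf x) * (Real.log 2 * tf x) +
        Ef x * (Real.log 2 * (Real.log 2 * tf x))) * (Ef x - 1) ^ 2 -
      -(Ef x * (Real.log 2 * tf x)) *
        (↑(2:ℕ) * (Ef x - 1) ^ (2 - 1) * (Ef x * (Real.log 2 * tf x)))) /
      ((Ef x - 1) ^ 2) ^ 2) x := by
  have hne : (fun y => (Ef y - 1) ^ 2) x ≠ 0 := by
    have := Ef_gt_one x
    have h0 : Ef x - 1 ≠ 0 := by linarith
    simpa using pow_ne_zero 2 h0
  have hN := ((Ef_deriv x).mul ((tf_deriv x).const_mul (Real.log 2))).neg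
  have hD := ((Ef_deriv x).sub_const 1).pow 2
  exact hN.div hD hne

lemma key (s : ℝ) (hs : 0 < s) : (1 - s) * Real.exp s ≤ 1 + s := by
  rcases le_or_gt 1 s with h | h
  · nlinarith [Real.exp_pos s]
  · have h1 : 1 - s ≤ Real.exp (-s) := by have := Real.add_one_le_exp (-s); linarith
    have h2 : (1 - s) * Real.exp s ≤ Real.exp (-s) * Real.exp s :=
      mul_le_mul_of_nonneg_right h1 (Real.exp_pos s).le
    rw [← Real.exp_add, neg_add_cancel, Real.exp_zero] at h2
    linarith

lemma F1_deriv_nonneg (x : ℝ) : 0 ≤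
    (-(Ef x * (Real.log 2 * tf x) * (Real.log 2 * tf x) +
        Ef x * (Real.log 2 * (Real.log 2 * tf x))) * (Ef x - 1) ^ 2 -
      -(Ef x * (Real.log 2 * tf x)) *
        (↑(2:ℕ) * (Ef x - 1) ^ (2 - 1) * (Ef x * (Real.log 2 * tf x)))) /
      ((Ef x - 1) ^ 2) ^ 2 := by
  have hs := tf_pos x
  have he := Ef_gt_one x
  have hk : 0 ≤ (tf x - 1) * Ef x + (tf x + 1) := by
    have := key (tf x) hs
    have hE : Ef x = Real.exp (tf x) := rfl
    nlinarith
  apply div_nonneg _ (by positivity)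
  have hfac : (-(Ef x * (Real.log 2 * tf x) * (Real.log 2 * tf x) +
        Ef x * (Real.log 2 * (Real.log 2 * tf x))) * (Ef x - 1) ^ 2 -
      -(Ef x * (Real.log 2 * tf x)) *
        (↑(2:ℕ) * (Ef x - 1) ^ (2 - 1) * (Ef x * (Real.log 2 * tf x)))) =
      (Ef x * Real.log 2 ^ 2 * tf x * (Ef x - 1)) * ((tf x - 1) * Ef x + (tf x + 1)) := by
    push_cast
    ring
  rw [hfac]
  have : 0 ≤ Ef x * Real.log 2 ^ 2 * tf x * (Ef x - 1) := by
    have h0 : (0:ℝ) < Ef x := lt_trans one_pos he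
    have : (0:ℝ) ≤ Ef x - 1 := by linarith
    positivity
  exact mul_nonneg this hk

/-- The function `f(x) = 1/(2^(2^x) − 1)` (real exponents) is well defined
(`2^(2^x) > 1` for all real `x`), strictly decreasing, and convex on `ℝ`. -/
theorem stmt_10 :
    (∀ x : ℝ, 1 < (2 : ℝ) ^ ((2 : ℝ) ^ x)) ∧
    StrictAnti (fun x : ℝ => 1 / ((2 : ℝ) ^ ((2 : ℝ) ^ x) - 1)) ∧
    ConvexOn ℝ Set.univ (fun x : ℝ => 1 / ((2 : ℝ) ^ ((2 : ℝ) ^ x) - 1)) := by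
  have hE2 : ∀ x : ℝ, (2 : ℝ) ^ ((2 : ℝ) ^ x) = Ef x := by
    intro x
    rw [Real.rpow_def_of_pos two_pos, Real.rpow_def_of_pos two_pos]
    simp [Ef, tf, mul_comm]
  have hfun : (fun x : ℝ => 1 / ((2 : ℝ) ^ ((2 : ℝ) ^ x) - 1)) = Ff := by
    funext x
    rw [hE2 x, Ff, one_div]
  refine ⟨fun x => by rw [hE2 x]; exact Ef_gt_one x, ?_, ?_⟩
  · rw [hfun]
    intro x y hxy
    have htm : tf x < tf y := by
      have := Real.exp_lt_exp.mpr (mul_lt_mul_of_pos_left hxy (Real.log_pos one_lt_two))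
      exact mul_lt_mul_of_pos_left this (Real.log_pos one_lt_two)
    have hEm : Ef x < Ef y := Real.exp_lt_exp.mpr htm
    have h1 : (0:ℝ) < Ef x - 1 := by have := Ef_gt_one x; linarith
    simp only [Ff]
    gcongr
  · rw [hfun]
    have hd1 : deriv Ff = F1 := funext fun x => (Ff_deriv x).deriv
    apply convexOn_of_deriv2_nonneg convex_univ
    · exact (Differentiable.continuous fun x => (Ff_deriv x).differentiableAt).continuousOn
    · exact fun x _ => ((Ff_deriv x).differentiableAt).differentiableWithinAt
    · rw [hd1]
      exact fun x _ => ((F1_deriv x).differentiableAt).differentiableWithinAt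
    · intro x _
      have : deriv^[2] Ff x = deriv (deriv Ff) x := rfl
      rw [this, hd1, (F1_deriv x).deriv]
      exact F1_deriv_nonneg x
end

section
/- Let N ≥ 1, a_1, …, a_N > 0, m_1, …, m_N > 0, and B > Σ_i m_i. Then: (i) there exists ω > 0 such that Σ_i max(m_i, √(a_i/ω)) = B; and (ii) for any such ω, the allocation B_i* = max(m_i, √(a_i/ω)) minimizes Σ_i a_i/B_i over the set {(B_1, …, B_N) : B_i ≥ m_i for all i and Σ_i B_i ≤ B}. -/
open Finset

/-- Tangent line inequality for `x ↦ a / x` at `y`. -/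
lemma tangent_ineq (a x y : ℝ) (ha : 0 < a) (hx : 0 < x) (hy : 0 < y) :
    a / y + (a / y ^ 2) * (y - x) ≤ a / x := by
  have h : a / x - (a / y + (a / y ^ 2) * (y - x)) = a * (x - y) ^ 2 / (x * y ^ 2) := by
    field_simp
    ring
  nlinarith [div_nonneg (mul_nonneg ha.le (sq_nonneg (x - y))) (le_of_lt (by positivity : (0:ℝ) < x * y ^ 2))]

/-- Bandwidth allocation with per-device lower bounds (Theorem 3): (i) there is an
`ω > 0` with `∑ i max (m i) √(a i / ω) = B`; (ii) for any such `ω`, the allocation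
`B* i = max (m i) √(a i / ω)` minimizes `∑ a i / B i` over all allocations with
`B i ≥ m i` and `∑ B i ≤ B`. -/
theorem stmt_12 (N : ℕ) (hN : 1 ≤ N) (a m : Fin N → ℝ)
    (ha : ∀ i, 0 < a i) (hm : ∀ i, 0 < m i) (B : ℝ) (hB : (∑ i, m i) < B) :
    (∃ ω : ℝ, 0 < ω ∧ (∑ i, max (m i) (Real.sqrt (a i / ω))) = B) ∧
    ∀ ω : ℝ, 0 < ω → (∑ i, max (m i) (Real.sqrt (a i / ω))) = B →
      ∀ Bv : Fin N → ℝ, (∀ i, m i ≤ Bv i) → (∑ i, Bv i) ≤ B →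
        (∑ i, a i / max (m i) (Real.sqrt (a i / ω))) ≤ ∑ i, a i / Bv i := by
  have hB0 : 0 < B :=
    lt_of_le_of_lt (Finset.sum_nonneg fun i _ => (hm i).le) hB
  constructor
  · -- existence via IVT
    set i0 : Fin N := ⟨0, hN⟩
    set f : ℝ → ℝ := fun ω => ∑ i, max (m i) (Real.sqrt (a i / ω)) with hf
    have hne : (Finset.univ : Finset (Fin N)).Nonempty := ⟨i0, Finset.mem_univ _⟩
    set ω₀ : ℝ := Finset.univ.sup' hne (fun i => a i / (m i) ^ 2) with hw0
    have hω₀pos : 0 < ω₀ := lt_of_lt_of_le (div_pos (ha i0) (pow_pos (hm i0) 2))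
      (Finset.le_sup' (fun i => a i / (m i) ^ 2) (Finset.mem_univ i0))
    have hfω₀ : f ω₀ = ∑ i, m i := by
      apply Finset.sum_congr rfl
      intro i _
      have h1 : a i / (m i) ^ 2 ≤ ω₀ := Finset.le_sup' (fun i => a i / (m i) ^ 2) (Finset.mem_univ i)
      have h2 : a i / ω₀ ≤ (m i) ^ 2 := by
        rw [div_le_iff₀ hω₀pos]
        rw [div_le_iff₀ (pow_pos (hm i) 2)] at h1
        linarith
      have : Real.sqrt (a i / ω₀) ≤ m i := by
        calc Real.sqrt (a i / ω₀) ≤ Real.sqrt ((m i)^2) := Real.sqrt_le_sqrt h2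
          _ = m i := Real.sqrt_sq (hm i).le
      exact max_eq_left this
    set ω₁ : ℝ := min (a i0 / B ^ 2) ω₀ with hw1
    have hω₁pos : 0 < ω₁ := lt_min (div_pos (ha i0) (pow_pos hB0 2)) hω₀pos
    have hfω₁ : B ≤ f ω₁ := by
      have h1 : B ≤ Real.sqrt (a i0 / ω₁) := by
        have hmin : ω₁ ≤ a i0 / B ^ 2 := min_le_left _ _
        have h2 : B ^ 2 ≤ a i0 / ω₁ := by
          rw [le_div_iff₀ hω₁pos]
          rw [le_div_iff₀ (by positivity : (0:ℝ) < B ^ 2)] at hmin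
          linarith
        calc B = Real.sqrt (B ^ 2) := (Real.sqrt_sq hB0.le).symm
          _ ≤ Real.sqrt (a i0 / ω₁) := Real.sqrt_le_sqrt h2
      calc B ≤ max (m i0) (Real.sqrt (a i0 / ω₁)) := le_max_of_le_right h1
        _ ≤ f ω₁ := Finset.single_le_sum (f := fun i => max (m i) (Real.sqrt (a i / ω₁)))
            (fun i _ => le_max_of_le_left (hm i).le) (Finset.mem_univ i0)
    have hcont : ContinuousOn f (Set.Icc ω₁ ω₀) := by
      apply continuousOn_finset_sum
      intro i _
      refine ContinuousOn.sup continuousOn_const (Real.continuous_sqrt.comp_continuousOn ?_)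
      exact continuousOn_const.div continuousOn_id fun x hx =>
        ne_of_gt (lt_of_lt_of_le hω₁pos hx.1)
    have hle : ω₁ ≤ ω₀ := min_le_right _ _
    have hmem : B ∈ Set.Icc (f ω₀) (f ω₁) := ⟨by rw [hfω₀]; exact hB.le, hfω₁⟩
    obtain ⟨ω, hωmem, hωeq⟩ := intermediate_value_Icc' hle hcont hmem
    exact ⟨ω, lt_of_lt_of_le hω₁pos hωmem.1, hωeq⟩
  · -- optimality
    intro ω hω hsum Bv hBv hBsum
    set Bs : Fin N → ℝ := fun i => max (m i) (Real.sqrt (a i / ω)) with hBs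
    have hBspos : ∀ i, 0 < Bs i := fun i => lt_max_of_lt_left (hm i)
    have hBvpos : ∀ i, 0 < Bv i := fun i => lt_of_lt_of_le (hm i) (hBv i)
    have key : ∀ i, a i / Bs i + ω * (Bs i - Bv i) ≤ a i / Bv i := by
      intro i
      have htang := tangent_ineq (a i) (Bv i) (Bs i) (ha i) (hBvpos i) (hBspos i)
      have hsq : Real.sqrt (a i / ω) ^ 2 = a i / ω :=
        Real.sq_sqrt (div_pos (ha i) hω).le
      rcases le_or_gt (Real.sqrt (a i / ω)) (m i) with h | h
      · have heq : Bs i = m i := max_eq_left h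
        -- λ i = a i / (m i)^2 ≤ ω and Bv i ≥ m i = Bs i
        have hlam : a i / (Bs i) ^ 2 ≤ ω := by
          rw [heq, div_le_iff₀ (pow_pos (hm i) 2)]
          have h2 : a i / ω ≤ (m i) ^ 2 := by
            rw [← hsq]
            exact pow_le_pow_left₀ (Real.sqrt_nonneg _) h 2
          rw [div_le_iff₀ hω] at h2
          linarith
        have hBvge : Bs i ≤ Bv i := heq ▸ hBv i
        nlinarith [mul_le_mul_of_nonpos_right hlam (by linarith : Bs i - Bv i ≤ 0)]
      · have heq : Bs i = Real.sqrt (a i / ω) := max_eq_right h.le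
        have hlam : a i / (Bs i) ^ 2 = ω := by
          rw [heq, hsq]
          field_simp [(ha i).ne']
        rw [hlam] at htang
        linarith
    calc ∑ i, a i / Bs i
        = ∑ i, (a i / Bs i + ω * (Bs i - Bv i)) - ω * (B - ∑ i, Bv i) := by
          rw [Finset.sum_add_distrib, ← Finset.mul_sum, Finset.sum_sub_distrib, hsum]
          ring
      _ ≤ ∑ i, (a i / Bs i + ω * (Bs i - Bv i)) :=
          sub_le_self _ (mul_nonneg hω.le (by linarith))
      _ ≤ ∑ i, a i / Bv i := Finset.sum_le_sum fun i _ => key i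
end
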